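/- In the graph with a-labeled cycle of length 3 through vertex 0 (edges (0,a,1),(1,a,2),(2,a,0)) and b-labeled cycle of length 2 through vertex 0 (edges (0,b,3),(3,b,0)): every path p starting at vertex 0 with Ω(p) = a^m b^m for some m ≥ 1 satisfies 3 ∣ m. -/
import Mathlib

/-- A path in an edge-labeled directed graph with edge set `E ⊆ V × L × V` is a nonempty
list of consecutively incident edges. -/
def IsPath {V L : Type} (E : Set (V × L × V)) (p : List (V × L × V)) : Prop :=
  p ≠ [] ∧ (∀ e ∈ p, e ∈ E) ∧ p.Chain' (fun e f => e.2.2 = f.1)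

/-- The start vertex of a path (source of its first edge). -/
def pathStart {V L : Type} (p : List (V × L × V)) : Option V :=
  p.head?.map (fun e => e.1)

/-- The end vertex of a path (target of its last edge). -/
def pathEnd {V L : Type} (p : List (V × L × V)) : Option V :=
  p.getLast?.map (fun e => e.2.2)

/-- Ω(p): the word of labels along a path. -/
def Omega {V L : Type} (p : List (V × L × V)) : List L :=
  p.map (fun e => e.2.1)

/-- The example graph: vertices {0,1,2,3}, labels a = 0, b = 1, and edges
(0,a,1), (1,a,2), (2,a,0), (0,b,3), (3,b,0). -/
def E0 : Set (Fin 4 × Fin 2 × Fin 4) :=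
  {((0 : Fin 4), (0 : Fin 2), (1 : Fin 4)), (1, 0, 2), (2, 0, 0), (0, 1, 3), (3, 1, 0)}

lemma aux_step : ∀ (m : ℕ) (p : List (Fin 4 × Fin 2 × Fin 4)) (v : Fin 4),
    v.val < 3 →
    (∀ e ∈ p, e ∈ E0) → p.Chain' (fun e f => e.2.2 = f.1) →
    pathStart p = some v →
    ∀ k, 1 ≤ k → Omega p = List.replicate m (0 : Fin 2) ++ List.replicate k (1 : Fin 2) →
    (v.val + m) % 3 = 0 := by
  intro m
  induction m with
  | zero =>
    intro p v hv hE hch hst k hk hΩ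
    match p, k with
    | e :: rest, k + 1 =>
      simp [Omega, List.replicate_succ] at hΩ
      have he : e ∈ E0 := hE e (by simp)
      have hl : e.2.1 = 1 := hΩ.1
      simp only [pathStart, List.head?] at hst
      have hv' : e.1 = v := by simpa using hst
      simp only [E0, Set.mem_insert_iff, Set.mem_singleton_iff] at he
      rcases he with h | h | h | h | h <;> subst h <;> simp_all <;> omega
  | succ n ih =>
    intro p v hv hE hch hst k hk hΩ
    match p with
    | e :: rest =>
      simp [Omega, List.replicate_succ] at hΩ
      have he : e ∈ E0 := hE e (by simp)
      have hl : e.2.1 = 0 := hΩ.1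
      simp only [pathStart, List.head?] at hst
      have hv' : e.1 = v := by simpa using hst
      -- rest is nonempty
      have hΩr : Omega rest = List.replicate n (0 : Fin 2) ++ List.replicate k (1 : Fin 2) := by
        simpa [Omega] using hΩ.2
      have hne : rest ≠ [] := by
        intro h; subst h
        simp [Omega] at hΩr
        rcases hΩr with ⟨h1, h2⟩
        omega
      match rest, hne with
      | f :: rest', _ =>
        have hchain : e.2.2 = f.1 := (List.isChain_cons_cons.mp hch).1
        have hch' : (f :: rest').Chain' (fun e f => e.2.2 = f.1) := (List.isChain_cons_cons.mp hch).2
        have hst' : pathStart (f :: rest') = some e.2.2 := by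
          simp [pathStart, hchain]
        have hE' : ∀ x ∈ f :: rest', x ∈ E0 := fun x hx => hE x (by simp [hx])
        simp only [E0, Set.mem_insert_iff, Set.mem_singleton_iff] at he
        have key : ∀ (w : Fin 4), w.val < 3 → pathStart (f :: rest') = some w →
            (w.val + n) % 3 = 0 → True := fun _ _ _ _ => trivial
        rcases he with h | h | h | h | h <;> subst h <;>
          first
          | (have := ih (f :: rest') _ (by decide) hE' hch' hst' k hk hΩr
             simp_all
             omega)
          | (exact absurd hl (by decide))

/-- Every path starting at vertex 0 whose label word is aᵐbᵐ for some m ≥ 1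
satisfies 3 ∣ m. -/
theorem matched_path_three_dvd :
    ∀ (p : List (Fin 4 × Fin 2 × Fin 4)) (m : ℕ), 1 ≤ m →
      IsPath E0 p → pathStart p = some 0 →
      Omega p = List.replicate m (0 : Fin 2) ++ List.replicate m (1 : Fin 2) →
      3 ∣ m := by
  intro p m hm hpath hst hΩ
  have := aux_step m p 0 (by norm_num) hpath.2.1 hpath.2.2 hst m hm hΩ
  simp at this
  omega
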